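/- arXiv:1911.13070 — 2 statements merged into one kernel-verified Lean document; each statement's English description precedes it below -/
import Mathlib

section
/- Let E : H → ℝ be a sublinear expectation and let p, q > 1 with 1/p + 1/q = 1. Then for X, Y ∈ H with |XY|, |X|^p, |Y|^q ∈ H, E[|XY|] ≤ (E[|X|^p])^{1/p} · (E[|Y|^q])^{1/q}. -/
/-!
Young's inequality gives `|xy| ≤ αβ (|x|^p / (p α^p) + |y|^q / (q β^q))` pointwise for all
`α, β > 0`. Monotonicity, subadditivity and positive homogeneity bound `E` of the right-hand side
by the same combination of `E[|X|^p]` and `E[|Y|^q]`; since `H` is only closed under sums, the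
coefficients are reached as limits of `⌈n a⌉₊ / n`. Normalising by `α^p = E[|X|^p] + ε`,
`β^q = E[|Y|^q] + ε` makes the bound `αβ`, and `ε → 0⁺` gives the inequality; the `ε` keeps the
normalisers positive when an expectation vanishes.
-/

open Filter Topology

lemma Real.abs_mul_le_young_rescaled {p q : ℝ} (hpq : p.HolderConjugate q) {α β : ℝ}
    (hα : 0 < α) (hβ : 0 < β) (x y : ℝ) :
    |x * y| ≤ α * β / (p * α ^ p) * |x| ^ p + α * β / (q * β ^ q) * |y| ^ q := by
  have hyoung := Real.young_inequality_of_nonneg (div_nonneg (abs_nonneg x) hα.le)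
    (div_nonneg (abs_nonneg y) hβ.le) hpq
  rw [Real.div_rpow (abs_nonneg x) hα.le, Real.div_rpow (abs_nonneg y) hβ.le] at hyoung
  have hαp : 0 < α ^ p := Real.rpow_pos_of_pos hα p
  have hβq : 0 < β ^ q := Real.rpow_pos_of_pos hβ q
  have hp := hpq.pos
  have hq := hpq.symm.pos
  calc |x * y| = α * β * (|x| / α * (|y| / β)) := by rw [abs_mul]; field_simp
    _ ≤ α * β * (|x| ^ p / α ^ p / p + |y| ^ q / β ^ q / q) := by gcongr
    _ = _ := by field_simp

lemma le_mul_rpow_of_forall_pos_le_add_rpow {A B r s C : ℝ}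
    (hr : 0 ≤ r) (hs : 0 ≤ s) (hC : ∀ ε > 0, C ≤ (A + ε) ^ r * (B + ε) ^ s) :
    C ≤ A ^ r * B ^ s := by
  have hlim : Tendsto (fun ε => (A + ε) ^ r * (B + ε) ^ s) (𝓝[>] 0) (𝓝 (A ^ r * B ^ s)) := by
    have hε : Tendsto (fun ε : ℝ => ε) (𝓝[>] 0) (𝓝 0) := nhdsWithin_le_nhds
    have hAε : Tendsto (fun ε => A + ε) (𝓝[>] 0) (𝓝 A) := by
      simpa using tendsto_const_nhds.add hε
    have hBε : Tendsto (fun ε => B + ε) (𝓝[>] 0) (𝓝 B) := by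
      simpa using tendsto_const_nhds.add hε
    exact (hAε.rpow_const (Or.inr hr)).mul (hBε.rpow_const (Or.inr hs))
  exact ge_of_tendsto hlim (eventually_nhdsWithin_of_forall hC)

namespace SublinearExpectation

variable {Ω : Type*} {H : Set (Ω → ℝ)} {E : (Ω → ℝ) → ℝ}

lemma expect_nonneg (h0 : (fun _ : Ω => (0 : ℝ)) ∈ H) (hE0 : E (fun _ => 0) = 0)
    (hmono : ∀ X ∈ H, ∀ Y ∈ H, (∀ ω, X ω ≤ Y ω) → E X ≤ E Y)
    {f : Ω → ℝ} (hf : f ∈ H) (hf0 : ∀ ω, 0 ≤ f ω) : 0 ≤ E f :=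
  hE0 ▸ hmono _ h0 _ hf hf0

lemma natCast_smul_mem (h0 : (fun _ : Ω => (0 : ℝ)) ∈ H)
    (hadd : ∀ X ∈ H, ∀ Y ∈ H, X + Y ∈ H) {f : Ω → ℝ} (hf : f ∈ H) (n : ℕ) :
    (n : ℝ) • f ∈ H := by
  induction n with
  | zero => rw [Nat.cast_zero, zero_smul]; exact h0
  | succ k ih => simpa [add_smul] using hadd _ ih _ hf

lemma expect_natCast_smul (hE0 : E (fun _ => 0) = 0)
    (hposhom : ∀ X ∈ H, ∀ c : ℝ, 0 < c → E (c • X) = c * E X)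
    {f : Ω → ℝ} (hf : f ∈ H) (n : ℕ) : E ((n : ℝ) • f) = n * E f := by
  rcases n.eq_zero_or_pos with rfl | hn
  · rw [Nat.cast_zero, zero_smul, zero_mul]; exact hE0
  · exact hposhom f hf n (Nat.cast_pos.mpr hn)

lemma natCast_mul_expect_le (h0 : (fun _ : Ω => (0 : ℝ)) ∈ H) (hE0 : E (fun _ => 0) = 0)
    (hadd : ∀ X ∈ H, ∀ Y ∈ H, X + Y ∈ H)
    (hmono : ∀ X ∈ H, ∀ Y ∈ H, (∀ ω, X ω ≤ Y ω) → E X ≤ E Y)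
    (hsubadd : ∀ X ∈ H, ∀ Y ∈ H, E (X + Y) ≤ E X + E Y)
    (hposhom : ∀ X ∈ H, ∀ c : ℝ, 0 < c → E (c • X) = c * E X)
    {f g h : Ω → ℝ} (hf : f ∈ H) (hg : g ∈ H) (hh : h ∈ H) {n m₁ m₂ : ℕ} (hn : 0 < n)
    (hle : ∀ ω, n * h ω ≤ m₁ * f ω + m₂ * g ω) :
    n * E h ≤ m₁ * E f + m₂ * E g := by
  have hfm := natCast_smul_mem h0 hadd hf m₁
  have hgm := natCast_smul_mem h0 hadd hg m₂
  calc (n : ℝ) * E h = E ((n : ℝ) • h) := (hposhom h hh n (Nat.cast_pos.mpr hn)).symm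
    _ ≤ E ((m₁ : ℝ) • f + (m₂ : ℝ) • g) :=
        hmono _ (natCast_smul_mem h0 hadd hh n) _ (hadd _ hfm _ hgm) hle
    _ ≤ E ((m₁ : ℝ) • f) + E ((m₂ : ℝ) • g) := hsubadd _ hfm _ hgm
    _ = m₁ * E f + m₂ * E g := by
        rw [expect_natCast_smul hE0 hposhom hf, expect_natCast_smul hE0 hposhom hg]

lemma expect_le_mul_add_mul (h0 : (fun _ : Ω => (0 : ℝ)) ∈ H) (hE0 : E (fun _ => 0) = 0)
    (hadd : ∀ X ∈ H, ∀ Y ∈ H, X + Y ∈ H)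
    (hmono : ∀ X ∈ H, ∀ Y ∈ H, (∀ ω, X ω ≤ Y ω) → E X ≤ E Y)
    (hsubadd : ∀ X ∈ H, ∀ Y ∈ H, E (X + Y) ≤ E X + E Y)
    (hposhom : ∀ X ∈ H, ∀ c : ℝ, 0 < c → E (c • X) = c * E X)
    {f g h : Ω → ℝ} (hf : f ∈ H) (hg : g ∈ H) (hh : h ∈ H)
    (hf0 : ∀ ω, 0 ≤ f ω) (hg0 : ∀ ω, 0 ≤ g ω) {a b : ℝ} (ha : 0 ≤ a) (hb : 0 ≤ b)
    (hle : ∀ ω, h ω ≤ a * f ω + b * g ω) :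
    E h ≤ a * E f + b * E g := by
  have hlim : Tendsto (fun n : ℕ => (⌈a * n⌉₊ : ℝ) / n * E f + (⌈b * n⌉₊ : ℝ) / n * E g)
      atTop (𝓝 (a * E f + b * E g)) :=
    ((((tendsto_nat_ceil_mul_div_atTop ha).comp tendsto_natCast_atTop_atTop).mul_const _).add
      (((tendsto_nat_ceil_mul_div_atTop hb).comp tendsto_natCast_atTop_atTop).mul_const _))
  refine ge_of_tendsto hlim (eventually_atTop.2 ⟨1, fun n hn => ?_⟩)
  have hn0 : (0 : ℝ) < n := Nat.cast_pos.mpr hn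
  have hscaled : (n : ℝ) * E h ≤ ⌈a * n⌉₊ * E f + ⌈b * n⌉₊ * E g := by
    refine natCast_mul_expect_le h0 hE0 hadd hmono hsubadd hposhom hf hg hh hn fun ω => ?_
    have h1 : a * n * f ω ≤ ⌈a * n⌉₊ * f ω := mul_le_mul_of_nonneg_right (Nat.le_ceil _) (hf0 ω)
    have h2 : b * n * g ω ≤ ⌈b * n⌉₊ * g ω := mul_le_mul_of_nonneg_right (Nat.le_ceil _) (hg0 ω)
    nlinarith [hle ω]
  rw [div_mul_eq_mul_div, div_mul_eq_mul_div, ← add_div, le_div_iff₀ hn0]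
  linarith

lemma expect_abs_mul_le_add_rpow (h0 : (fun _ : Ω => (0 : ℝ)) ∈ H) (hE0 : E (fun _ => 0) = 0)
    (hadd : ∀ X ∈ H, ∀ Y ∈ H, X + Y ∈ H)
    (hmono : ∀ X ∈ H, ∀ Y ∈ H, (∀ ω, X ω ≤ Y ω) → E X ≤ E Y)
    (hsubadd : ∀ X ∈ H, ∀ Y ∈ H, E (X + Y) ≤ E X + E Y)
    (hposhom : ∀ X ∈ H, ∀ c : ℝ, 0 < c → E (c • X) = c * E X)
    {p q : ℝ} (hpq : p.HolderConjugate q) {X Y : Ω → ℝ}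
    (hXY : (fun ω => |X ω * Y ω|) ∈ H) (hXp : (fun ω => |X ω| ^ p) ∈ H)
    (hYq : (fun ω => |Y ω| ^ q) ∈ H) {ε : ℝ} (hε : 0 < ε) :
    E (fun ω => |X ω * Y ω|) ≤
      (E (fun ω => |X ω| ^ p) + ε) ^ (1 / p) * (E (fun ω => |Y ω| ^ q) + ε) ^ (1 / q) := by
  have hp0 := hpq.pos
  have hq0 := hpq.symm.pos
  set A := E fun ω => |X ω| ^ p
  set B := E fun ω => |Y ω| ^ q
  have hXp0 : ∀ ω, 0 ≤ |X ω| ^ p := fun ω => Real.rpow_nonneg (abs_nonneg _) _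
  have hYq0 : ∀ ω, 0 ≤ |Y ω| ^ q := fun ω => Real.rpow_nonneg (abs_nonneg _) _
  have hAε : 0 < A + ε := by linarith [expect_nonneg h0 hE0 hmono hXp hXp0]
  have hBε : 0 < B + ε := by linarith [expect_nonneg h0 hE0 hmono hYq hYq0]
  set α := (A + ε) ^ (1 / p)
  set β := (B + ε) ^ (1 / q)
  have hα : α ^ p = A + ε := by simp only [α, one_div]; exact Real.rpow_inv_rpow hAε.le hp0.ne'
  have hβ : β ^ q = B + ε := by simp only [β, one_div]; exact Real.rpow_inv_rpow hBε.le hq0.ne'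
  calc E (fun ω => |X ω * Y ω|)
      ≤ α * β / (p * α ^ p) * A + α * β / (q * β ^ q) * B :=
        expect_le_mul_add_mul h0 hE0 hadd hmono hsubadd hposhom hXp hYq hXY hXp0 hYq0
          (by positivity) (by positivity)
          fun ω => Real.abs_mul_le_young_rescaled hpq (by positivity) (by positivity) _ _
    _ = α * β * (p⁻¹ * (A / (A + ε)) + q⁻¹ * (B / (B + ε))) := by
        rw [hα, hβ]; field_simp
    _ ≤ α * β * (p⁻¹ * 1 + q⁻¹ * 1) := by
        gcongr
        · exact div_le_one_of_le₀ (by linarith) hAε.le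
        · exact div_le_one_of_le₀ (by linarith) hBε.le
    _ = α * β := by rw [mul_one, mul_one, hpq.inv_add_inv_eq_one, mul_one]

end SublinearExpectation

open SublinearExpectation in
theorem stmt_5_general {Ω : Type*} (H : Set (Ω → ℝ)) (E : (Ω → ℝ) → ℝ)
    (hconst : ∀ c : ℝ, (fun _ : Ω => c) ∈ H)
    (hadd : ∀ X ∈ H, ∀ Y ∈ H, X + Y ∈ H)
    (hmono : ∀ X ∈ H, ∀ Y ∈ H, (∀ ω, X ω ≤ Y ω) → E X ≤ E Y)
    (hE_const : ∀ c : ℝ, E (fun _ => c) = c)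
    (hsubadd : ∀ X ∈ H, ∀ Y ∈ H, E (X + Y) ≤ E X + E Y)
    (hposhom : ∀ X ∈ H, ∀ c : ℝ, 0 < c → E (c • X) = c * E X)
    (p q : ℝ) (hp : 1 < p) (hpq : 1 / p + 1 / q = 1)
    (X Y : Ω → ℝ)
    (hXY : (fun ω => |X ω * Y ω|) ∈ H)
    (hXp : (fun ω => |X ω| ^ p) ∈ H)
    (hYq : (fun ω => |Y ω| ^ q) ∈ H) :
    E (fun ω => |X ω * Y ω|) ≤
      (E (fun ω => |X ω| ^ p)) ^ (1 / p) * (E (fun ω => |Y ω| ^ q)) ^ (1 / q) := by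
  have hconj : p.HolderConjugate q :=
    Real.holderConjugate_iff.mpr ⟨hp, by simpa only [one_div] using hpq⟩
  have hp0 := hconj.pos
  have hq0 := hconj.symm.pos
  exact le_mul_rpow_of_forall_pos_le_add_rpow (by positivity) (by positivity) fun ε hε =>
    expect_abs_mul_le_add_rpow (hconst 0) (hE_const 0) hadd hmono hsubadd hposhom hconj
      hXY hXp hYq hε

/-- Hölder's inequality for sublinear expectations:
`E[|XY|] ≤ (E[|X|^p])^(1/p) · (E[|Y|^q])^(1/q)` for conjugate exponents `p, q > 1`. -/
theorem stmt_5 {Ω : Type*} (H : Set (Ω → ℝ)) (E : (Ω → ℝ) → ℝ)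
    (hconst : ∀ c : ℝ, (fun _ : Ω => c) ∈ H)
    (hadd : ∀ X ∈ H, ∀ Y ∈ H, X + Y ∈ H)
    (hneg : ∀ X ∈ H, -X ∈ H)
    (hmono : ∀ X ∈ H, ∀ Y ∈ H, (∀ ω, X ω ≤ Y ω) → E X ≤ E Y)
    (hE_const : ∀ c : ℝ, E (fun _ => c) = c)
    (hsubadd : ∀ X ∈ H, ∀ Y ∈ H, E (X + Y) ≤ E X + E Y)
    (hposhom : ∀ X ∈ H, ∀ c : ℝ, 0 < c → E (c • X) = c * E X)
    (p q : ℝ) (hp : 1 < p) (hq : 1 < q) (hpq : 1 / p + 1 / q = 1)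
    (X Y : Ω → ℝ) (hX : X ∈ H) (hY : Y ∈ H)
    (hXY : (fun ω => |X ω * Y ω|) ∈ H)
    (hXp : (fun ω => |X ω| ^ p) ∈ H)
    (hYq : (fun ω => |Y ω| ^ q) ∈ H) :
    E (fun ω => |X ω * Y ω|) ≤
      (E (fun ω => |X ω| ^ p)) ^ (1 / p) * (E (fun ω => |Y ω| ^ q)) ^ (1 / q) :=
  stmt_5_general H E hconst hadd hmono hE_const hsubadd hposhom p q hp hpq X Y hXY hXp hYq
end

section
/- Let u : ℝ≥0 → ℝ≥0 be continuous and satisfy u(t) ≤ A·∫_{t₀}^{t} u(s) ds + B·(t − t₀)² for all t ∈ [t₀, t₁], where A, B ≥ 0. Then u(t) ≤ B·e^{A(t−t₀)}·(t − t₀)² for all t ∈ [t₀, t₁]. -/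
open Set Real Topology intervalIntegral MeasureTheory

/-! On `[t₀, t]` the hypothesis gives `u ≤ A w` for `w x = ∫_{t₀}^x (u s + c) ds` with the
constant `c = B (t - t₀)²`. Then `w' = u + c ≤ A w + c` and `w t₀ = 0`, so the differential
Gronwall inequality gives `A w x ≤ c (e^{A (x - t₀)} - 1)`. -/

theorem mul_gronwallBound_zero (K ε x : ℝ) :
    K * gronwallBound 0 K ε x = ε * (exp (K * x) - 1) := by
  rcases eq_or_ne K 0 with rfl | hK
  · simp
  · rw [gronwallBound_of_K_ne_0 hK]
    field_simp
    ring

section Primitive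

variable {f : ℝ → ℝ} {a b : ℝ}

theorem continuousOn_primitive_Icc (hf : ContinuousOn f (Icc a b)) :
    ContinuousOn (fun x => ∫ s in a..x, f s) (Icc a b) := by
  rcases (Icc a b).eq_empty_or_nonempty with hempty | hne
  · simp [hempty]
  · have hab : a ≤ b := nonempty_Icc.mp hne
    have hint : IntegrableOn f (uIcc a b) volume := by
      rw [uIcc_of_le hab]
      exact hf.integrableOn_compact isCompact_Icc
    simpa only [uIcc_of_le hab] using continuousOn_primitive_interval hint

theorem hasDerivWithinAt_primitive_Ici (hf : ContinuousOn f (Icc a b)) {x : ℝ}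
    (hx : x ∈ Ico a b) : HasDerivWithinAt (fun y => ∫ s in a..y, f s) (f x) (Ici x) x := by
  have hIcc : Icc a b ∈ 𝓝[>] x := Icc_mem_nhdsGT_of_mem hx
  exact integral_hasDerivWithinAt_right
    ((hf.mono (Icc_subset_Icc_right hx.2.le)).intervalIntegrable_of_Icc hx.1)
    ((hf.stronglyMeasurableAtFilter_nhdsWithin measurableSet_Icc x).filter_mono
      (nhdsWithin_le_of_mem hIcc))
    ((hf x (Ico_subset_Icc_self hx)).mono_of_mem_nhdsWithin hIcc)

end Primitive

theorem le_mul_exp_sub_one_of_le_mul_integral_add_const {u : ℝ → ℝ} {a b A c : ℝ}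
    (hu : ContinuousOn u (Icc a b)) (hA : 0 ≤ A)
    (h : ∀ x ∈ Icc a b, u x ≤ A * ∫ s in a..x, (u s + c)) :
    ∀ x ∈ Icc a b, u x ≤ c * (exp (A * (x - a)) - 1) := by
  have hu_add : ContinuousOn (fun s => u s + c) (Icc a b) := hu.add continuousOn_const
  have hprimitive : ∀ x ∈ Icc a b, ∫ s in a..x, (u s + c) ≤ gronwallBound 0 A c (x - a) :=
    le_gronwallBound_of_liminf_deriv_right_le (continuousOn_primitive_Icc hu_add)
      (fun x hx _ hr => (hasDerivWithinAt_primitive_Ici hu_add hx).liminf_right_slope_le hr)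
      (by simp) (fun x hx => by linarith [h x (Ico_subset_Icc_self hx)])
  intro x hx
  calc u x ≤ A * ∫ s in a..x, (u s + c) := h x hx
    _ ≤ A * gronwallBound 0 A c (x - a) := by gcongr; exact hprimitive x hx
    _ = c * (exp (A * (x - a)) - 1) := mul_gronwallBound_zero A c (x - a)

theorem stmt_9_general (u : ℝ → ℝ) (t₀ t₁ A B : ℝ)
    (hA : 0 ≤ A) (hB : 0 ≤ B)
    (hu_cont : ContinuousOn u (Set.Icc t₀ t₁))
    (hbound : ∀ t ∈ Set.Icc t₀ t₁,
      u t ≤ A * ∫ s in t₀..t, u s + B * (t - t₀) ^ 2) :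
    ∀ t ∈ Set.Icc t₀ t₁, u t ≤ B * Real.exp (A * (t - t₀)) * (t - t₀) ^ 2 := by
  intro t ht
  have hu_t : ContinuousOn u (Icc t₀ t) := hu_cont.mono (Icc_subset_Icc_right ht.2)
  have hbound_t : ∀ x ∈ Icc t₀ t, u x ≤ A * ∫ s in t₀..x, (u s + B * (t - t₀) ^ 2) := by
    intro x hx
    have hint (k : ℝ) : IntervalIntegrable (fun s => u s + k) volume t₀ x :=
      ((hu_t.mono (Icc_subset_Icc_right hx.2)).add continuousOn_const).intervalIntegrable_of_Icc
        hx.1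
    refine (hbound x ⟨hx.1, hx.2.trans ht.2⟩).trans <| mul_le_mul_of_nonneg_left
      (integral_mono_on hx.1 (hint _) (hint _) fun s _ => ?_) hA
    have hx₀ : 0 ≤ x - t₀ := sub_nonneg.mpr hx.1
    gcongr
    exact hx.2
  have hBT : 0 ≤ B * (t - t₀) ^ 2 := by positivity
  calc u t ≤ B * (t - t₀) ^ 2 * (exp (A * (t - t₀)) - 1) :=
        le_mul_exp_sub_one_of_le_mul_integral_add_const hu_t hA hbound_t t ⟨ht.1, le_rfl⟩
    _ ≤ B * exp (A * (t - t₀)) * (t - t₀) ^ 2 := by nlinarith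

/-- Gronwall-type lemma: if a continuous nonnegative `u` satisfies
`u t ≤ A ∫_{t₀}^t u + B (t−t₀)²` on `[t₀,t₁]`, then `u t ≤ B e^{A(t−t₀)} (t−t₀)²`. -/
theorem stmt_9 (u : ℝ → ℝ) (t₀ t₁ A B : ℝ) (ht₀ : 0 ≤ t₀) (ht : t₀ ≤ t₁)
    (hA : 0 ≤ A) (hB : 0 ≤ B)
    (hu_cont : ContinuousOn u (Set.Icc t₀ t₁))
    (hu_nonneg : ∀ t ∈ Set.Icc t₀ t₁, 0 ≤ u t)
    (hbound : ∀ t ∈ Set.Icc t₀ t₁,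
      u t ≤ A * ∫ s in t₀..t, u s + B * (t - t₀) ^ 2) :
    ∀ t ∈ Set.Icc t₀ t₁, u t ≤ B * Real.exp (A * (t - t₀)) * (t - t₀) ^ 2 :=
  stmt_9_general u t₀ t₁ A B hA hB hu_cont hbound
end
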